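/- arXiv:0904.2061 — 2 statements merged into one kernel-verified Lean document; each statement's English description precedes it below -/
import Mathlib

section
/- Every instance of selfish bin covering admits a Nash equilibrium π with p(π) = OPT; that is, the price of stability with respect to Nash equilibria is 1. -/
open Finset

/-- Total size of the items in a bin. -/
def binSize {n : ℕ} (a : Fin n → ℕ) (B : Finset (Fin n)) : ℕ := ∑ j ∈ B, a j

/-- The social welfare of a partition: the number of covered bins. -/
def welfare {n : ℕ} (a : Fin n → ℕ) (b : ℕ)
    (π : Finpartition (univ : Finset (Fin n))) : ℕ :=
  (π.parts.filter fun B => b ≤ binSize a B).card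

/-- The payoff of item `j` when it lies in bin `B`. -/
def payoffIn {n : ℕ} (a : Fin n → ℕ) (b : ℕ) (j : Fin n) (B : Finset (Fin n)) : ℚ :=
  if b ≤ binSize a B then (a j : ℚ) / (binSize a B : ℚ) else 0

/-- Nash equilibrium. -/
def IsNE {n : ℕ} (a : Fin n → ℕ) (b : ℕ)
    (π : Finpartition (univ : Finset (Fin n))) : Prop :=
  (∀ j : Fin n, ∀ B ∈ π.parts, j ∉ B →
      payoffIn a b j (insert j B) ≤ payoffIn a b j (π.part j)) ∧
  ∀ j : Fin n, payoffIn a b j {j} ≤ payoffIn a b j (π.part j)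

/-- A partition is reasonable if at most one bin is uncovered. -/
def Reasonable {n : ℕ} (a : Fin n → ℕ) (b : ℕ)
    (π : Finpartition (univ : Finset (Fin n))) : Prop :=
  (π.parts.filter fun B => binSize a B < b).card ≤ 1

/-- A bin is minimal covered if it is covered and removing any member uncovers it. -/
def MinimalCovered {n : ℕ} (a : Fin n → ℕ) (b : ℕ) (B : Finset (Fin n)) : Prop :=
  b ≤ binSize a B ∧ ∀ j ∈ B, binSize a (B.erase j) < b

/-- A partition is rational if it is reasonable and every covered bin is minimal covered. -/
def RationalPartition {n : ℕ} (a : Fin n → ℕ) (b : ℕ)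
    (π : Finpartition (univ : Finset (Fin n))) : Prop :=
  Reasonable a b π ∧ ∀ B ∈ π.parts, b ≤ binSize a B → MinimalCovered a b B

/-- `B_m(π)`: the unique uncovered bin of a (rational) partition if one exists, `∅` otherwise. -/
def uncoveredBin {n : ℕ} (a : Fin n → ℕ) (b : ℕ)
    (π : Finpartition (univ : Finset (Fin n))) : Finset (Fin n) :=
  (π.parts.filter fun B => binSize a B < b).sup id

/-- `δ(B) = s(B)` if `B` is covered, `+∞` otherwise. -/
def delta {n : ℕ} (a : Fin n → ℕ) (b : ℕ) (B : Finset (Fin n)) : ℕ∞ :=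
  if b ≤ binSize a B then (binSize a B : ℕ∞) else ⊤

/-- Fireable Nash equilibrium of type (I). -/
def IsFNE1 {n : ℕ} (a : Fin n → ℕ) (b : ℕ)
    (π : Finpartition (univ : Finset (Fin n))) : Prop :=
  RationalPartition a b π ∧
  ¬ ∃ j : Fin n, b ≤ binSize a (π.part j) ∧
      MinimalCovered a b (insert j (uncoveredBin a b π)) ∧
      binSize a (uncoveredBin a b π) + a j < binSize a (π.part j)

/-- Fireable Nash equilibrium of type (II). -/
def IsFNE2 {n : ℕ} (a : Fin n → ℕ) (b : ℕ)
    (π : Finpartition (univ : Finset (Fin n))) : Prop :=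
  RationalPartition a b π ∧
  ¬ ∃ (j : Fin n) (E : Finset (Fin n)), b ≤ binSize a (π.part j) ∧
      E ⊆ uncoveredBin a b π ∧
      MinimalCovered a b (insert j (uncoveredBin a b π \ E)) ∧
      binSize a (uncoveredBin a b π \ E) + a j < binSize a (π.part j)

/-- Fireable Nash equilibrium of type (III). -/
def IsFNE3 {n : ℕ} (a : Fin n → ℕ) (b : ℕ)
    (π : Finpartition (univ : Finset (Fin n))) : Prop :=
  RationalPartition a b π ∧
  ¬ ∃ (j : Fin n) (Bi E : Finset (Fin n)), Bi ∈ π.parts ∧ j ∉ Bi ∧ E ⊆ Bi ∧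
      MinimalCovered a b (insert j (Bi \ E)) ∧
      ((binSize a (Bi \ E) + a j : ℕ) : ℕ∞) < min (delta a b Bi) (delta a b (π.part j))

/-- Modified strong Nash equilibrium. -/
def IsMSNE {n : ℕ} (a : Fin n → ℕ) (b : ℕ)
    (π : Finpartition (univ : Finset (Fin n))) : Prop :=
  RationalPartition a b π ∧
  ¬ ∃ (Bi E : Finset (Fin n)), Bi ∈ π.parts ∧ b ≤ binSize a Bi ∧ E ⊆ Bi ∧
      binSize a (uncoveredBin a b π) < binSize a (Bi \ E) ∧
      MinimalCovered a b (uncoveredBin a b π ∪ E)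

/-- Strong Nash equilibrium. -/
def IsSNE {n : ℕ} (a : Fin n → ℕ) (b : ℕ)
    (π : Finpartition (univ : Finset (Fin n))) : Prop :=
  ¬ ∃ B : Finset (Fin n), b ≤ binSize a B ∧
      ∀ j ∈ B, binSize a (π.part j) < b ∨ binSize a B < binSize a (π.part j)

/-- `F` is a minimum subset w.r.t. `(E, b)`. -/
def IsMinSubset {n : ℕ} (a : Fin n → ℕ) (b : ℕ) (F E : Finset (Fin n)) : Prop :=
  F ⊆ E ∧ b ≤ binSize a F ∧ ∀ G ⊆ E, b ≤ binSize a G → binSize a F ≤ binSize a G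

/-!
Start from a partition of maximum welfare. If the optimum is `0`, every partition is an NE: a
deviation of `j` into `B` produces a subset of `part j ∪ B`, which would be a covered bin of the
partition merging these two parts. Otherwise, merging all uncovered bins into one covered bin gives
an optimal partition whose bins are all covered, and among these a partition minimising
`∑ s(B)²` is an NE: item `j` only gains by moving from its bin `A` to a bin `B` with
`s(B) + a_j < s(A)`; then `A \ {j}` stays covered, and `∑ s(B)²` drops by
`2 a_j (s(A) - a_j - s(B))`.
-/

namespace Finpartition

section Replace

variable {α : Type*} [DistribLattice α] [OrderBot α] [DecidableEq α] {a : α}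
  (P : Finpartition a) {T : Finset α}

lemma disjoint_sup_of_mem_sdiff (hT : T ⊆ P.parts) {x : α} (hx : x ∈ P.parts \ T) :
    Disjoint x (T.sup id) := by
  rw [mem_sdiff] at hx
  exact Finset.disjoint_sup_right.2 fun t ht =>
    P.disjoint hx.1 (hT ht) fun h => hx.2 (h ▸ ht)

@[simps]
def replace (hT : T ⊆ P.parts) (Q : Finpartition (T.sup id)) : Finpartition a where
  parts := P.parts \ T ∪ Q.parts
  supIndep := by
    rw [supIndep_iff_pairwiseDisjoint, coe_union]
    refine (P.supIndep.subset sdiff_subset).pairwiseDisjoint.union Q.supIndep.pairwiseDisjoint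
      fun x hx y hy _ => ?_
    exact (P.disjoint_sup_of_mem_sdiff hT hx).mono_right (Q.le hy)
  sup_parts := by
    rw [sup_union, Q.sup_parts, ← sup_union, sdiff_union_of_subset hT, P.sup_parts]
  bot_notMem := by
    rw [mem_union, not_or]
    exact ⟨fun h => P.bot_notMem (mem_sdiff.1 h).1, Q.bot_notMem⟩

lemma sum_replace_add_sum {M : Type*} [AddCommMonoid M] (hT : T ⊆ P.parts)
    (Q : Finpartition (T.sup id)) (f : α → M) :
    ∑ x ∈ (P.replace hT Q).parts, f x + ∑ x ∈ T, f x =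
      ∑ x ∈ P.parts, f x + ∑ x ∈ Q.parts, f x := by
  have hdisj : Disjoint (P.parts \ T) Q.parts := by
    refine Finset.disjoint_left.2 fun x hx hxQ => Q.ne_bot hxQ ?_
    exact disjoint_self.1 ((P.disjoint_sup_of_mem_sdiff hT hx).mono_right (Q.le hxQ))
  rw [replace_parts, sum_union hdisj, add_right_comm, sum_sdiff hT]

end Replace

lemma exists_move {ι : Type*} [DecidableEq ι] {s : Finset ι} (P : Finpartition s) {x : ι}
    {A B : Finset ι} (hA : A ∈ P.parts) (hB : B ∈ P.parts) (hxA : x ∈ A) (hxB : x ∉ B)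
    (hA' : (A.erase x).Nonempty) :
    ∃ P' : Finpartition s, (∀ C ∈ P'.parts, C ∈ P.parts ∨ C = insert x B ∨ C = A.erase x) ∧
      ∀ f : Finset ι → ℕ, ∑ C ∈ P'.parts, f C + (f A + f B) =
        ∑ C ∈ P.parts, f C + (f (insert x B) + f (A.erase x)) := by
  have hAB : A ≠ B := fun h => hxB (h ▸ hxA)
  have hT : {A, B} ⊆ P.parts := insert_subset hA (singleton_subset_iff.2 hB)
  have hdisj : Disjoint (A.erase x) (insert x B) :=
    disjoint_insert_right.2 ⟨notMem_erase x A, (P.disjoint hA hB hAB).mono_left (erase_subset x A)⟩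
  have hunion : A.erase x ⊔ insert x B = ({A, B} : Finset (Finset ι)).sup id := by
    ext y
    simp only [sup_eq_union, sup_insert, sup_singleton, id, mem_union, mem_erase, mem_insert]
    by_cases hy : y = x <;> simp_all
  let Q := (indiscrete hA'.ne_empty).extend (insert_nonempty x B).ne_empty hdisj hunion
  have hne : insert x B ≠ A.erase x := fun h => notMem_erase x A (h ▸ mem_insert_self x B)
  refine ⟨P.replace hT Q, fun C hC => ?_, fun f => ?_⟩
  · simp only [replace_parts, mem_union, mem_sdiff, Q, extend_parts, indiscrete_parts,
      mem_insert, mem_singleton] at hC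
    tauto
  · rw [← sum_pair hAB, ← sum_pair hne, P.sum_replace_add_sum hT Q, extend_parts, indiscrete_parts]

end Finpartition

section BinCovering

variable {n : ℕ} {a : Fin n → ℕ} {b : ℕ}

def AllCovered (a : Fin n → ℕ) (b : ℕ) (π : Finpartition (univ : Finset (Fin n))) : Prop :=
  ∀ B ∈ π.parts, b ≤ binSize a B

def sqPotential (a : Fin n → ℕ) (π : Finpartition (univ : Finset (Fin n))) : ℕ :=
  ∑ B ∈ π.parts, binSize a B ^ 2

lemma binSize_mono {B C : Finset (Fin n)} (h : B ⊆ C) : binSize a B ≤ binSize a C :=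
  sum_le_sum_of_subset h

lemma binSize_insert {j : Fin n} {B : Finset (Fin n)} (hj : j ∉ B) :
    binSize a (insert j B) = a j + binSize a B :=
  sum_insert hj

lemma binSize_erase_add {j : Fin n} {A : Finset (Fin n)} (hj : j ∈ A) :
    binSize a (A.erase j) + a j = binSize a A :=
  sum_erase_add A a hj

lemma welfare_eq_sum (π : Finpartition (univ : Finset (Fin n))) :
    welfare a b π = ∑ B ∈ π.parts, if b ≤ binSize a B then 1 else 0 :=
  card_filter _ _

lemma binSize_lt_of_welfare_eq_zero {π : Finpartition (univ : Finset (Fin n))}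
    (h : welfare a b π = 0) {B : Finset (Fin n)} (hB : B ∈ π.parts) : binSize a B < b := by
  by_contra! hcov
  exact card_ne_zero.2 ⟨B, mem_filter.2 ⟨hB, hcov⟩⟩ h

lemma payoffIn_nonneg (j : Fin n) (B : Finset (Fin n)) : 0 ≤ payoffIn a b j B := by
  unfold payoffIn
  split <;> positivity

lemma payoffIn_eq_zero {j : Fin n} {B : Finset (Fin n)} (h : binSize a B < b) :
    payoffIn a b j B = 0 :=
  if_neg h.not_ge

lemma lt_of_payoffIn_lt {j : Fin n} {A C : Finset (Fin n)} (hjA : j ∈ A) (hA : b ≤ binSize a A)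
    (h : payoffIn a b j A < payoffIn a b j C) :
    b ≤ binSize a C ∧ binSize a C < binSize a A ∧ 0 < a j := by
  have hC : b ≤ binSize a C := by
    by_contra! hC
    rw [payoffIn_eq_zero hC] at h
    exact h.not_ge (payoffIn_nonneg j A)
  rw [payoffIn, payoffIn, if_pos hA, if_pos hC] at h
  have hj : 0 < a j := by
    by_contra! hj
    simp [Nat.le_zero.1 hj] at h
  refine ⟨hC, ?_, hj⟩
  by_contra! hle
  have hpos : (0 : ℚ) < binSize a A := by
    exact_mod_cast hj.trans_le (single_le_sum (fun _ _ => Nat.zero_le _) hjA)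
  exact h.not_ge (div_le_div_of_nonneg_left (by positivity) hpos (by exact_mod_cast hle))

lemma isNE_of_forall_welfare_eq_zero (h : ∀ σ, welfare a b σ = 0)
    (π : Finpartition (univ : Finset (Fin n))) : IsNE a b π := by
  have hpart : ∀ j, binSize a (π.part j) < b := fun j =>
    binSize_lt_of_welfare_eq_zero (h π) (π.part_mem.2 (mem_univ j))
  refine ⟨fun j B hB hjB => ?_, fun j => ?_⟩
  · set T : Finset (Finset (Fin n)) := {π.part j, B}
    have hT : T ⊆ π.parts := insert_subset (π.part_mem.2 (mem_univ j)) (singleton_subset_iff.2 hB)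
    have hne : T.sup id ≠ ⊥ := ne_bot_of_le_ne_bot (π.ne_bot hB) (le_sup (f := id) (by simp [T]))
    have hmerged : binSize a (T.sup id) < b :=
      binSize_lt_of_welfare_eq_zero (h (π.replace hT (Finpartition.indiscrete hne))) (by simp)
    have hsub : insert j B ⊆ T.sup id := by
      simpa [T] using insert_subset_insert j (subset_union_right (s₁ := π.part j))
    rw [payoffIn_eq_zero (hpart j), payoffIn_eq_zero ((binSize_mono hsub).trans_lt hmerged)]
  · have hsub : {j} ⊆ π.part j := singleton_subset_iff.2 (π.mem_part (mem_univ j))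
    rw [payoffIn_eq_zero (hpart j), payoffIn_eq_zero ((binSize_mono hsub).trans_lt (hpart j))]

lemma exists_allCovered_welfare_eq {π : Finpartition (univ : Finset (Fin n))}
    (hπ : 0 < welfare a b π) : ∃ σ, AllCovered a b σ ∧ welfare a b σ = welfare a b π := by
  obtain ⟨B₀, hB₀⟩ := card_pos.1 hπ
  rw [mem_filter] at hB₀
  set U := π.parts.filter fun B => ¬ b ≤ binSize a B
  set T := insert B₀ U
  have hT : T ⊆ π.parts := insert_subset hB₀.1 (filter_subset _ _)
  have hB₀T : B₀ ≤ T.sup id := le_sup (f := id) (mem_insert_self B₀ U)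
  have hne : T.sup id ≠ ⊥ := ne_bot_of_le_ne_bot (π.ne_bot hB₀.1) hB₀T
  have hcov : b ≤ binSize a (T.sup id) := hB₀.2.trans (binSize_mono hB₀T)
  refine ⟨π.replace hT (Finpartition.indiscrete hne), fun C hC => ?_, ?_⟩
  · simp only [Finpartition.replace_parts, Finpartition.indiscrete_parts, mem_union, mem_sdiff,
      mem_singleton, T, mem_insert, U, mem_filter, not_or, not_and, not_not] at hC
    rcases hC with ⟨hC, -, hCcov⟩ | rfl
    · exact hCcov hC
    · exact hcov
  · have key := π.sum_replace_add_sum hT (Finpartition.indiscrete hne)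
      fun C => if b ≤ binSize a C then 1 else 0
    have hU : ∑ C ∈ U, (if b ≤ binSize a C then 1 else 0) = 0 :=
      sum_eq_zero fun C hC => if_neg (mem_filter.1 hC).2
    have hB₀U : B₀ ∉ U := fun h => (mem_filter.1 h).2 hB₀.2
    simp only [T, sum_insert hB₀U, hU, if_pos hB₀.2, Finpartition.indiscrete_parts,
      sum_singleton, if_pos hcov] at key
    rw [welfare_eq_sum, welfare_eq_sum]
    omega

lemma exists_sqPotential_lt_of_payoffIn_lt {π : Finpartition (univ : Finset (Fin n))}
    (hπ : AllCovered a b π) {j : Fin n} {A B : Finset (Fin n)} (hA : A ∈ π.parts)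
    (hB : B ∈ π.parts) (hjA : j ∈ A) (hjB : j ∉ B)
    (hlt : payoffIn a b j A < payoffIn a b j (insert j B)) :
    ∃ σ, AllCovered a b σ ∧ welfare a b σ = welfare a b π ∧ sqPotential a σ < sqPotential a π := by
  obtain ⟨hcovjB, hltA, hj⟩ := lt_of_payoffIn_lt hjA (hπ A hA) hlt
  rw [binSize_insert hjB] at hcovjB hltA
  have hAj := binSize_erase_add (a := a) hjA
  have hBcov := hπ B hB
  have hcovA : b ≤ binSize a (A.erase j) := by omega
  have hA' : (A.erase j).Nonempty := nonempty_of_sum_ne_zero (show binSize a _ ≠ 0 by omega)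
  obtain ⟨σ, hσ, hsum⟩ := π.exists_move hA hB hjA hjB hA'
  have hσcov : AllCovered a b σ := fun C hC => by
    rcases hσ C hC with hC | rfl | rfl
    · exact hπ C hC
    · rwa [binSize_insert hjB]
    · exact hcovA
  refine ⟨σ, hσcov, ?_, ?_⟩
  · have key := hsum fun C => if b ≤ binSize a C then 1 else 0
    simp only [if_pos (hπ A hA), if_pos hBcov, binSize_insert hjB, if_pos hcovjB,
      if_pos hcovA] at key
    rw [welfare_eq_sum, welfare_eq_sum]
    omega
  · have key := hsum fun C => binSize a C ^ 2
    simp only [binSize_insert hjB] at key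
    unfold sqPotential
    nlinarith

lemma isNE_of_forall_sqPotential_le (hab : ∀ j, a j < b)
    {π : Finpartition (univ : Finset (Fin n))} (hπ : AllCovered a b π)
    (hmin : ∀ σ, AllCovered a b σ → welfare a b σ = welfare a b π →
      sqPotential a π ≤ sqPotential a σ) : IsNE a b π := by
  refine ⟨fun j B hB hjB => ?_, fun j => ?_⟩
  · by_contra! hlt
    obtain ⟨σ, hσ, hσw, hσQ⟩ := exists_sqPotential_lt_of_payoffIn_lt hπ
      (π.part_mem.2 (mem_univ j)) hB (π.mem_part (mem_univ j)) hjB hlt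
    exact (hmin σ hσ hσw).not_gt hσQ
  · rw [payoffIn_eq_zero (by simpa [binSize] using hab j)]
    exact payoffIn_nonneg j _

end BinCovering

theorem stmt3_general (n : ℕ) (a : Fin n → ℕ) (b : ℕ)
    (hab : ∀ j, a j < b) :
    ∃ π : Finpartition (univ : Finset (Fin n)),
      IsNE a b π ∧ ∀ σ : Finpartition (univ : Finset (Fin n)),
        welfare a b σ ≤ welfare a b π := by
  classical
  obtain ⟨σ, -, hσ⟩ := exists_max_image univ (welfare a b) univ_nonempty
  rcases Nat.eq_zero_or_pos (welfare a b σ) with h0 | hpos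
  · exact ⟨σ, isNE_of_forall_welfare_eq_zero (fun τ => Nat.le_zero.1 (h0 ▸ hσ τ (mem_univ τ))) σ,
      fun τ => hσ τ (mem_univ τ)⟩
  obtain ⟨τ, hτ, hτw⟩ := exists_allCovered_welfare_eq hpos
  obtain ⟨π, hπ, hπmin⟩ := (univ.filter fun π => AllCovered a b π ∧
    welfare a b π = welfare a b σ).exists_min_image (sqPotential a) ⟨τ, by simp [hτ, hτw]⟩
  rw [mem_filter] at hπ
  refine ⟨π, isNE_of_forall_sqPotential_le hab hπ.2.1 fun ρ hρ hρw => ?_, fun ρ => ?_⟩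
  · exact hπmin ρ (mem_filter.2 ⟨mem_univ ρ, hρ, hρw.trans hπ.2.2⟩)
  · exact hπ.2.2 ▸ hσ ρ (mem_univ ρ)

/-- every instance admits an NE whose welfare equals `OPT`
(price of stability w.r.t. NE is 1). -/
theorem stmt3 (n : ℕ) (hn : 1 ≤ n) (a : Fin n → ℕ) (b : ℕ)
    (ha : ∀ j, 0 < a j) (hab : ∀ j, a j < b) :
    ∃ π : Finpartition (univ : Finset (Fin n)),
      IsNE a b π ∧ ∀ σ : Finpartition (univ : Finset (Fin n)),
        welfare a b σ ≤ welfare a b π :=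
  stmt3_general n a b hab
end

section
/- Every reasonable partition that is a strong Nash equilibrium (SNE) is an M-SNE. -/
open Finset

/-! A covered bin `B` that is not minimal covered would be
blocked by `B.erase j`, which is still covered and strictly smaller since `a j > 0`. A deviation
witnessing that `π` is not an M-SNE would be blocked by `B_m(π) ∪ E`: its members from `B_m(π)`
leave an uncovered bin, and its members from `E` leave `B_i`, which is larger since
`s(B_m(π)) < s(B_i ∖ E)`. -/

section

variable {n : ℕ} {a : Fin n → ℕ} {b : ℕ} {π : Finpartition (univ : Finset (Fin n))}

theorem IsSNE.minimalCovered (hsne : IsSNE a b π) (ha : ∀ j, 0 < a j) {B : Finset (Fin n)}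
    (hB : B ∈ π.parts) (hcov : b ≤ binSize a B) : MinimalCovered a b B := by
  refine ⟨hcov, fun j hj => ?_⟩
  by_contra! hcov'
  have hsize : binSize a (B.erase j) + a j = binSize a B := sum_erase_add _ _ hj
  refine hsne ⟨B.erase j, hcov', fun k hk => Or.inr ?_⟩
  rw [π.part_eq_of_mem hB (mem_of_mem_erase hk)]
  linarith [ha j]

theorem binSize_part_lt_of_mem_uncoveredBin {k : Fin n} (hk : k ∈ uncoveredBin a b π) :
    binSize a (π.part k) < b := by
  obtain ⟨B, hB, hkB⟩ := mem_sup.mp hk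
  obtain ⟨hBπ, hBlt⟩ := mem_filter.mp hB
  rwa [π.part_eq_of_mem hBπ hkB]

theorem disjoint_uncoveredBin_of_covered {B : Finset (Fin n)} (hB : B ∈ π.parts)
    (hcov : b ≤ binSize a B) : Disjoint (uncoveredBin a b π) B := by
  refine Finset.disjoint_sup_left.mpr fun C hC => ?_
  obtain ⟨hCπ, hClt⟩ := mem_filter.mp hC
  exact π.disjoint hCπ hB (by rintro rfl; omega)

end

theorem stmt14_general (n : ℕ) (a : Fin n → ℕ) (b : ℕ)
    (ha : ∀ j, 0 < a j)
    (π : Finpartition (univ : Finset (Fin n)))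
    (hres : Reasonable a b π) (hsne : IsSNE a b π) :
    IsMSNE a b π := by
  refine ⟨⟨hres, fun B hB hcov => hsne.minimalCovered ha hB hcov⟩, ?_⟩
  rintro ⟨Bi, E, hBi, hcov, hE, hlt, hmc⟩
  set U := uncoveredBin a b π
  have hUE : Disjoint U E :=
    (disjoint_uncoveredBin_of_covered hBi hcov).mono_right hE
  have hsmaller : binSize a (U ∪ E) < binSize a Bi := by
    calc binSize a (U ∪ E) = binSize a U + binSize a E := sum_union hUE
      _ < binSize a (Bi \ E) + binSize a E := by omega
      _ = binSize a Bi := sum_sdiff hE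
  refine hsne ⟨U ∪ E, hmc.1, fun k hk => ?_⟩
  rcases mem_union.mp hk with hkU | hkE
  · exact Or.inl (binSize_part_lt_of_mem_uncoveredBin hkU)
  · exact Or.inr (by rwa [π.part_eq_of_mem hBi (hE hkE)])

/-- every reasonable SNE is an M-SNE. -/
theorem stmt14 (n : ℕ) (hn : 1 ≤ n) (a : Fin n → ℕ) (b : ℕ)
    (ha : ∀ j, 0 < a j) (hab : ∀ j, a j < b)
    (π : Finpartition (univ : Finset (Fin n)))
    (hres : Reasonable a b π) (hsne : IsSNE a b π) :
    IsMSNE a b π :=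
  stmt14_general n a b ha π hres hsne
end
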